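/- arXiv:2507.05562 — 4 statements merged into one kernel-verified Lean document; each statement's English description precedes it below -/
import Mathlib

section
/- Let V(p) = (t/2)‖p‖² + ⟨p, b⟩ + χ_{B∞}(-Aᵀp) with t ≥ 0, and let p₀ ∈ dom ∂V with descent direction d₀ = -proj_{∂V(p₀)}(0). Then for every Δ ∈ [0, Δ*] where p₀ + Δd₀ remains in dom V, we have V(p₀ + Δd₀) - V(p₀) = Δ(tΔ/2 - 1)‖d₀‖². In particular, if d₀ ≠ 0 and 0 < Δ < min(Δ*, 2/t), then d₀ is a descent direction. -/
/-!
Write `V = W + χ_C` with `W(p) = (t/2)‖p‖² + ⟨p, b⟩` and `C = {p | ‖-Aᵀp‖∞ ≤ 1}` convex. Then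
`∂V(p₀) = ∇W(p₀) + N_C(p₀)`, and since `N_C(p₀)` is a cone, writing `-d₀ = ∇W(p₀) + ν` the whole
ray `∇W(p₀) + μν`, `μ ≥ 0`, lies in `∂V(p₀)`. The squared norm along this ray is a quadratic in `μ`
minimised at the interior point `μ = 1`, so its derivative vanishes there: `⟨-d₀, ν⟩ = 0`, i.e.
`‖d₀‖² + ⟨∇W(p₀), d₀⟩ = 0`. Since `V = W` on `C`,
`V(p₀ + Δd₀) - V(p₀) = Δ⟨∇W(p₀), d₀⟩ + (tΔ²/2)‖d₀‖²`, which the identity turns into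
`Δ(tΔ/2 - 1)‖d₀‖²`.
-/

open Classical in
/-- The dual BPDN objective `V(p) = (t/2)‖p‖² + ⟨p, b⟩ + χ_{B∞}(-Aᵀp)`. -/
noncomputable def dualBPDN (m n : ℕ) (A : Matrix (Fin m) (Fin n) ℝ) (b : Fin m → ℝ)
    (t : ℝ) (p : Fin m → ℝ) : EReal :=
  if ∀ j, |(-(A.transpose.mulVec p)) j| ≤ 1 then
    (((t / 2) * ∑ i, p i ^ 2 + ∑ i, p i * b i : ℝ) : EReal)
  else ⊤

/-- Subdifferential of the dual BPDN objective. -/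
def subdiffBPDN (m n : ℕ) (A : Matrix (Fin m) (Fin n) ℝ) (b : Fin m → ℝ)
    (t : ℝ) (p : Fin m → ℝ) : Set (Fin m → ℝ) :=
  {s | ∀ q : Fin m → ℝ,
    dualBPDN m n A b t p + ((∑ i, s i * (q i - p i) : ℝ) : EReal) ≤ dualBPDN m n A b t q}

open Matrix Filter Topology

lemma nonpos_of_forall_mul_le_sq_mul {x B : ℝ}
    (h : ∀ ε : ℝ, 0 < ε → ε ≤ 1 → ε * x ≤ ε ^ 2 * B) : x ≤ 0 := by
  have hlim : Tendsto (fun ε : ℝ => ε * B) (𝓝[>] 0) (𝓝 0) :=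
    ((continuous_mul_const B).tendsto' 0 0 (zero_mul B)).mono_left nhdsWithin_le_nhds
  refine ge_of_tendsto hlim ?_
  filter_upwards [Ioc_mem_nhdsGT one_pos] with ε ⟨hε0, hε1⟩
  have := h ε hε0 hε1
  rw [sq, mul_assoc] at this
  exact le_of_mul_le_mul_left this hε0

section Quadratic

variable {ι : Type*} [Fintype ι]

lemma dotProduct_sub_eq_zero_of_le_on_add_cone {N : Set (ι → ℝ)}
    (hN : ∀ μ : ℝ, 0 ≤ μ → ∀ ν ∈ N, μ • ν ∈ N) {g s : ι → ℝ} (hs : s - g ∈ N)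
    (hmin : ∀ ν ∈ N, s ⬝ᵥ s ≤ (g + ν) ⬝ᵥ (g + ν)) : s ⬝ᵥ (s - g) = 0 := by
  set v := s - g
  have hray : ∀ μ : ℝ, 0 ≤ μ →
      0 ≤ 2 * (μ - 1) * (s ⬝ᵥ v) + (μ - 1) ^ 2 * (v ⬝ᵥ v) := by
    intro μ hμ
    have h := hmin _ (hN μ hμ v hs)
    have hs' : s = g + v := by simp [v]
    rw [hs'] at h ⊢
    simp only [dotProduct_add, add_dotProduct, dotProduct_smul, smul_dotProduct,
      smul_eq_mul, dotProduct_comm v g] at h ⊢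
    nlinarith
  have hle : s ⬝ᵥ v ≤ 0 := nonpos_of_forall_mul_le_sq_mul (B := v ⬝ᵥ v / 2) fun ε hε _ => by
    have := hray (1 - ε) (by linarith); nlinarith
  have hge : -(s ⬝ᵥ v) ≤ 0 := nonpos_of_forall_mul_le_sq_mul (B := v ⬝ᵥ v / 2) fun ε hε _ => by
    have := hray (1 + ε) (by linarith); nlinarith
  linarith

lemma sum_sq_eq_dotProduct (p : ι → ℝ) : ∑ i, p i ^ 2 = p ⬝ᵥ p := by
  simp only [dotProduct, sq]

noncomputable def quadObj (t : ℝ) (b p : ι → ℝ) : ℝ := t / 2 * (p ⬝ᵥ p) + p ⬝ᵥ b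

lemma quadObj_add_smul (t c : ℝ) (b p d : ι → ℝ) :
    quadObj t b (p + c • d) =
      quadObj t b p + c * ((t • p + b) ⬝ᵥ d) + t / 2 * c ^ 2 * (d ⬝ᵥ d) := by
  simp only [quadObj, dotProduct_add, add_dotProduct, dotProduct_smul, smul_dotProduct,
    smul_eq_mul, dotProduct_comm d p, dotProduct_comm d b]
  ring

lemma quadObj_add_dotProduct_sub_le {t : ℝ} (ht : 0 ≤ t) (b p q : ι → ℝ) :
    quadObj t b p + (t • p + b) ⬝ᵥ (q - p) ≤ quadObj t b q := by
  have h := quadObj_add_smul t 1 b p (q - p)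
  rw [one_smul, add_sub_cancel] at h
  have : 0 ≤ (q - p) ⬝ᵥ (q - p) := by simpa using dotProduct_self_star_nonneg (q - p)
  rw [h]; nlinarith

def normalCone (C : Set (ι → ℝ)) (p : ι → ℝ) : Set (ι → ℝ) :=
  {ν | ∀ q ∈ C, ν ⬝ᵥ (q - p) ≤ 0}

lemma smul_mem_normalCone {C : Set (ι → ℝ)} {p ν : ι → ℝ} {μ : ℝ} (hμ : 0 ≤ μ)
    (hν : ν ∈ normalCone C p) : μ • ν ∈ normalCone C p := fun q hq => by
  rw [smul_dotProduct, smul_eq_mul]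
  exact mul_nonpos_of_nonneg_of_nonpos hμ (hν q hq)

/-- `s` is a subgradient at `p` of `quadObj t b + χ_C`. -/
def IsQuadSubgradientOn (C : Set (ι → ℝ)) (t : ℝ) (b p s : ι → ℝ) : Prop :=
  ∀ q ∈ C, quadObj t b p + s ⬝ᵥ (q - p) ≤ quadObj t b q

lemma IsQuadSubgradientOn.sub_mem_normalCone {C : Set (ι → ℝ)} (hC : Convex ℝ C)
    {t : ℝ} {b p s : ι → ℝ} (hp : p ∈ C) (hs : IsQuadSubgradientOn C t b p s) :
    s - (t • p + b) ∈ normalCone C p := by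
  intro q hq
  refine nonpos_of_forall_mul_le_sq_mul (B := t / 2 * ((q - p) ⬝ᵥ (q - p))) fun ε hε0 hε1 => ?_
  have hmem : p + ε • (q - p) ∈ C := by
    simpa using hC.add_smul_sub_mem hp hq ⟨hε0.le, hε1⟩
  have h := hs _ hmem
  rw [quadObj_add_smul, add_sub_cancel_left, dotProduct_smul, smul_eq_mul] at h
  rw [sub_dotProduct]
  linarith

lemma isQuadSubgradientOn_add_of_mem_normalCone {C : Set (ι → ℝ)} {t : ℝ} (ht : 0 ≤ t)
    {b p ν : ι → ℝ} (hν : ν ∈ normalCone C p) :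
    IsQuadSubgradientOn C t b p (t • p + b + ν) := fun q hq => by
  have := quadObj_add_dotProduct_sub_le ht b p q
  have := hν q hq
  rw [add_dotProduct]
  linarith

end Quadratic

section BPDN

variable {m n : ℕ} {A : Matrix (Fin m) (Fin n) ℝ} {b : Fin m → ℝ} {t : ℝ}

/-- `{p | -Aᵀp ∈ B∞}`, the domain of `V`. -/
def dualFeasibleSet {ι κ : Type*} [Fintype ι] (A : Matrix ι κ ℝ) : Set (ι → ℝ) :=
  {p | ∀ j, |(-(Aᵀ *ᵥ p)) j| ≤ 1}

lemma convex_dualFeasibleSet {ι κ : Type*} [Fintype ι] [Fintype κ] (A : Matrix ι κ ℝ) :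
    Convex ℝ (dualFeasibleSet A) := by
  have : dualFeasibleSet A = (-(Aᵀ).mulVecLin) ⁻¹' Metric.closedBall 0 1 := by
    ext p
    simp [dualFeasibleSet, pi_norm_le_iff_of_nonneg zero_le_one, Matrix.mulVec_transpose]
  rw [this]
  exact (convex_closedBall 0 1).linear_preimage _

lemma dualBPDN_of_mem {p : Fin m → ℝ} (hp : p ∈ dualFeasibleSet A) :
    dualBPDN m n A b t p = quadObj t b p := by
  rw [quadObj, ← sum_sq_eq_dotProduct]
  exact if_pos hp

lemma dualBPDN_of_notMem {p : Fin m → ℝ} (hp : p ∉ dualFeasibleSet A) :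
    dualBPDN m n A b t p = ⊤ :=
  if_neg hp

lemma mem_dualFeasibleSet_of_dualBPDN_ne_top {p : Fin m → ℝ} (hp : dualBPDN m n A b t p ≠ ⊤) :
    p ∈ dualFeasibleSet A :=
  not_not.mp (mt dualBPDN_of_notMem hp)

/-- `∂V(p) = ∇W(p) + N_C(p)`, with `W = quadObj t b` and `C` the dual feasible set. -/
lemma mem_subdiffBPDN_iff (ht : 0 ≤ t) {p s : Fin m → ℝ} (hp : p ∈ dualFeasibleSet A) :
    s ∈ subdiffBPDN m n A b t p ↔ s - (t • p + b) ∈ normalCone (dualFeasibleSet A) p := by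
  have hsum : ∀ q : Fin m → ℝ, ∑ i, s i * (q i - p i) = s ⬝ᵥ (q - p) := fun q => rfl
  constructor
  · intro hs
    refine IsQuadSubgradientOn.sub_mem_normalCone (convex_dualFeasibleSet A) hp fun q hq => ?_
    have := hs q
    rwa [dualBPDN_of_mem hp, dualBPDN_of_mem hq, hsum, ← EReal.coe_add,
      EReal.coe_le_coe_iff] at this
  · intro hν q
    by_cases hq : q ∈ dualFeasibleSet A
    · have := isQuadSubgradientOn_add_of_mem_normalCone (b := b) ht hν q hq
      rw [add_sub_cancel] at this
      rwa [dualBPDN_of_mem hp, dualBPDN_of_mem hq, hsum, ← EReal.coe_add,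
        EReal.coe_le_coe_iff]
    · rw [dualBPDN_of_notMem hq]
      exact le_top

lemma dualBPDN_add_smul {p d : Fin m → ℝ} {Δ : ℝ} (hp : p ∈ dualFeasibleSet A)
    (hpd : p + Δ • d ∈ dualFeasibleSet A) :
    dualBPDN m n A b t (p + Δ • d) =
      dualBPDN m n A b t p +
        ((Δ * ((t • p + b) ⬝ᵥ d) + t / 2 * Δ ^ 2 * (d ⬝ᵥ d) : ℝ) : EReal) := by
  rw [dualBPDN_of_mem hp, dualBPDN_of_mem hpd, quadObj_add_smul, ← EReal.coe_add, add_assoc]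

lemma dotProduct_self_add_grad_eq_zero (ht : 0 ≤ t) {p₀ d₀ : Fin m → ℝ}
    (hp₀ : p₀ ∈ dualFeasibleSet A) (hmem : -d₀ ∈ subdiffBPDN m n A b t p₀)
    (hproj : ∀ s ∈ subdiffBPDN m n A b t p₀, ∑ i, d₀ i ^ 2 ≤ ∑ i, s i ^ 2) :
    d₀ ⬝ᵥ d₀ + (t • p₀ + b) ⬝ᵥ d₀ = 0 := by
  have h := dotProduct_sub_eq_zero_of_le_on_add_cone (fun μ hμ ν hν => smul_mem_normalCone hμ hν)
    ((mem_subdiffBPDN_iff ht hp₀).mp hmem) fun ν hν => by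
      have := hproj (t • p₀ + b + ν)
        ((mem_subdiffBPDN_iff ht hp₀).mpr (by rwa [add_sub_cancel_left]))
      rwa [sum_sq_eq_dotProduct, sum_sq_eq_dotProduct, ← neg_dotProduct_neg] at this
  simp only [neg_dotProduct, dotProduct_sub, dotProduct_neg, dotProduct_comm d₀ (t • p₀ + b)] at h
  linarith

end BPDN

/-- Energy identity along the minimal-selection descent direction
`d₀ = -proj_{∂V(p₀)}(0)`: for steps `Δ ∈ [0, Δ*]` staying in `dom V`,
`V(p₀ + Δ d₀) - V(p₀) = Δ(tΔ/2 - 1)‖d₀‖²`; in particular, if `d₀ ≠ 0` and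
`0 < Δ ≤ Δ*` with `tΔ < 2`, then `d₀` is a descent direction. -/
theorem stmt11 (m n : ℕ) (A : Matrix (Fin m) (Fin n) ℝ) (b : Fin m → ℝ)
    (t : ℝ) (ht : 0 ≤ t) (p₀ d₀ : Fin m → ℝ)
    (hmem : -d₀ ∈ subdiffBPDN m n A b t p₀)
    (hproj : ∀ s ∈ subdiffBPDN m n A b t p₀, ∑ i, d₀ i ^ 2 ≤ ∑ i, s i ^ 2)
    (Δstar : ℝ)
    (hdom : ∀ Δ : ℝ, 0 ≤ Δ → Δ ≤ Δstar → dualBPDN m n A b t (p₀ + Δ • d₀) ≠ ⊤) :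
    (∀ Δ : ℝ, 0 ≤ Δ → Δ ≤ Δstar →
      dualBPDN m n A b t (p₀ + Δ • d₀) =
        dualBPDN m n A b t p₀ + ((Δ * (t * Δ / 2 - 1) * ∑ i, d₀ i ^ 2 : ℝ) : EReal)) ∧
    (d₀ ≠ 0 → ∀ Δ : ℝ, 0 < Δ → Δ ≤ Δstar → t * Δ < 2 →
      dualBPDN m n A b t (p₀ + Δ • d₀) < dualBPDN m n A b t p₀) := by
  have hfeas : ∀ Δ : ℝ, 0 ≤ Δ → Δ ≤ Δstar → p₀ + Δ • d₀ ∈ dualFeasibleSet A :=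
    fun Δ h0 h1 => mem_dualFeasibleSet_of_dualBPDN_ne_top (hdom Δ h0 h1)
  have hp₀ : ∀ Δ : ℝ, 0 ≤ Δ → Δ ≤ Δstar → p₀ ∈ dualFeasibleSet A :=
    fun Δ h0 h1 => by simpa using hfeas 0 le_rfl (h0.trans h1)
  have hstep : ∀ Δ : ℝ, 0 ≤ Δ → Δ ≤ Δstar →
      dualBPDN m n A b t (p₀ + Δ • d₀) =
        dualBPDN m n A b t p₀ + ((Δ * (t * Δ / 2 - 1) * ∑ i, d₀ i ^ 2 : ℝ) : EReal) := by
    intro Δ h0 h1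
    have hkey := dotProduct_self_add_grad_eq_zero ht (hp₀ Δ h0 h1) hmem hproj
    rw [dualBPDN_add_smul (hp₀ Δ h0 h1) (hfeas Δ h0 h1), sum_sq_eq_dotProduct]
    congr 2
    linear_combination Δ * hkey
  refine ⟨hstep, fun hd Δ h0 h1 htΔ => ?_⟩
  have hpos : 0 < ∑ i, d₀ i ^ 2 := by
    rw [sum_sq_eq_dotProduct]
    exact lt_of_le_of_ne (by simpa using dotProduct_self_star_nonneg d₀)
      (Ne.symm (mt dotProduct_self_eq_zero.mp hd))
  rw [hstep Δ h0.le h1, dualBPDN_of_mem (hp₀ Δ h0.le h1), ← EReal.coe_add, EReal.coe_lt_coe_iff]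
  nlinarith [mul_pos h0 hpos]
end

section
/- Let V(p) = (t/2)‖p‖² + ⟨p, b⟩ + χ_{B∞}(-Aᵀp), p₀ ∈ dom ∂V, and d₀ = -proj_{∂V(p₀)}(0). For every Δ ∈ [0, Δ*(p₀)], the inclusion -(1 - tΔ)d₀ ∈ ∂V(p₀ + Δd₀) holds, where Δ*(p₀) is the maximal step keeping p₀ + Δd₀ in dom V. -/
lemma qform (m : ℕ) (t : ℝ) (p q b : Fin m → ℝ) :
    (t/2) * ∑ i, q i ^2 + ∑ i, q i * b i
      = ((t/2) * ∑ i, p i ^2 + ∑ i, p i * b i)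
        + ∑ i, (t * p i + b i) * (q i - p i) + (t/2) * ∑ i, (q i - p i)^2 := by
  simp only [Finset.mul_sum, ← Finset.sum_add_distrib]
  exact Finset.sum_congr rfl fun i _ => by ring

lemma expand_sq (m : ℕ) (l : ℝ) (x y : Fin m → ℝ) :
    ∑ i, (x i + l * y i)^2
      = ∑ i, x i ^2 + 2*l*∑ i, x i * y i + l^2 * ∑ i, y i ^2 := by
  simp only [Finset.mul_sum, ← Finset.sum_add_distrib]
  exact Finset.sum_congr rfl fun i _ => by ring

lemma limit_trick {a K : ℝ} (h : ∀ l : ℝ, 0 < l → l ≤ 1 → a ≤ l * K) : a ≤ 0 := by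
  by_contra hc
  push_neg at hc
  have h1 := h 1 one_pos le_rfl
  have hK : 0 < K := by linarith
  have h2 := h (a/(2*K)) (by positivity) (by rw [div_le_one (by linarith)]; linarith)
  have h3 : a/(2*K)*K = a/2 := by field_simp
  rw [h3] at h2
  linarith


lemma subdiff_real {m n : ℕ} {A : Matrix (Fin m) (Fin n) ℝ} {b : Fin m → ℝ}
    {t : ℝ} {p s : Fin m → ℝ} (hp : ∀ j, |(-(A.transpose.mulVec p)) j| ≤ 1)
    (hs : s ∈ subdiffBPDN m n A b t p) :
    ∀ q, (∀ j, |(-(A.transpose.mulVec q)) j| ≤ 1) →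
      (t/2) * ∑ i, p i ^2 + ∑ i, p i * b i + ∑ i, s i * (q i - p i)
        ≤ (t/2) * ∑ i, q i ^2 + ∑ i, q i * b i := by
  intro q hq
  have h := hs q
  rw [dualBPDN, if_pos hp, dualBPDN, if_pos hq, ← EReal.coe_add] at h
  exact_mod_cast h

lemma subdiff_of_real {m n : ℕ} {A : Matrix (Fin m) (Fin n) ℝ} {b : Fin m → ℝ}
    {t : ℝ} {p s : Fin m → ℝ} (hp : ∀ j, |(-(A.transpose.mulVec p)) j| ≤ 1)
    (h : ∀ q, (∀ j, |(-(A.transpose.mulVec q)) j| ≤ 1) →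
      (t/2) * ∑ i, p i ^2 + ∑ i, p i * b i + ∑ i, s i * (q i - p i)
        ≤ (t/2) * ∑ i, q i ^2 + ∑ i, q i * b i) :
    s ∈ subdiffBPDN m n A b t p := by
  intro q
  by_cases hq : ∀ j, |(-(A.transpose.mulVec q)) j| ≤ 1
  · rw [dualBPDN, if_pos hp, dualBPDN, if_pos hq, ← EReal.coe_add]
    exact_mod_cast h q hq
  · simp only [dualBPDN]
    rw [if_neg hq]
    exact le_top

lemma mem_C_zero {m n : ℕ} (A : Matrix (Fin m) (Fin n) ℝ) :
    ∀ j, |(-(A.transpose.mulVec (0 : Fin m → ℝ))) j| ≤ 1 := by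
  intro j
  simp [Matrix.mulVec_zero]

lemma C_convex {m n : ℕ} {A : Matrix (Fin m) (Fin n) ℝ} {p q : Fin m → ℝ}
    (hp : ∀ j, |(-(A.transpose.mulVec p)) j| ≤ 1)
    (hq : ∀ j, |(-(A.transpose.mulVec q)) j| ≤ 1)
    {l : ℝ} (hl0 : 0 ≤ l) (hl1 : l ≤ 1) :
    ∀ j, |(-(A.transpose.mulVec (p + l • (q - p)))) j| ≤ 1 := by
  intro j
  have hmv : A.transpose.mulVec (p + l • (q - p))
      = A.transpose.mulVec p + l • (A.transpose.mulVec q - A.transpose.mulVec p) := by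
    rw [Matrix.mulVec_add, Matrix.mulVec_smul, Matrix.mulVec_sub]
  rw [hmv]
  have hpj := hp j
  have hqj := hq j
  simp only [Pi.neg_apply, Pi.add_apply, Pi.smul_apply, Pi.sub_apply, smul_eq_mul] at *
  have key : -(A.transpose.mulVec p j + l * (A.transpose.mulVec q j - A.transpose.mulVec p j))
      = (1 - l) * (-(A.transpose.mulVec p j)) + l * (-(A.transpose.mulVec q j)) := by ring
  rw [key]
  calc |(1 - l) * (-(A.transpose.mulVec p j)) + l * (-(A.transpose.mulVec q j))|
      ≤ |(1 - l) * (-(A.transpose.mulVec p j))| + |l * (-(A.transpose.mulVec q j))| := abs_add_le _ _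
    _ = (1 - l) * |(-(A.transpose.mulVec p j))| + l * |(-(A.transpose.mulVec q j))| := by
        rw [abs_mul, abs_mul, abs_of_nonneg (by linarith), abs_of_nonneg hl0]
    _ ≤ (1 - l) * 1 + l * 1 := by gcongr <;> first | linarith | assumption
    _ = 1 := by ring

/-- Along the minimal-selection descent ray, the shrunken vector remains a subgradient:
for every `Δ ∈ [0, Δ*(p₀)]` (steps keeping `p₀ + Δ d₀` in `dom V`),
`-(1 - tΔ) d₀ ∈ ∂V(p₀ + Δ d₀)`. -/
theorem stmt12 (m n : ℕ) (A : Matrix (Fin m) (Fin n) ℝ) (b : Fin m → ℝ)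
    (t : ℝ) (ht : 0 ≤ t) (p₀ d₀ : Fin m → ℝ)
    (hmem : -d₀ ∈ subdiffBPDN m n A b t p₀)
    (hproj : ∀ s ∈ subdiffBPDN m n A b t p₀, ∑ i, d₀ i ^ 2 ≤ ∑ i, s i ^ 2)
    (Δstar : ℝ)
    (hdom : ∀ Δ : ℝ, 0 ≤ Δ → Δ ≤ Δstar → dualBPDN m n A b t (p₀ + Δ • d₀) ≠ ⊤) :
    ∀ Δ : ℝ, 0 ≤ Δ → Δ ≤ Δstar →
      (-(1 - t * Δ)) • d₀ ∈ subdiffBPDN m n A b t (p₀ + Δ • d₀) := by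
  intro Δ hΔ0 hΔ1
  -- p₀ is feasible
  have hp₀ : ∀ j, |(-(A.transpose.mulVec p₀)) j| ≤ 1 := by
    by_contra hc
    have h := hmem 0
    rw [dualBPDN, if_neg hc, dualBPDN, if_pos (mem_C_zero A), EReal.top_add_coe] at h
    exact absurd h (not_le.mpr (EReal.coe_lt_top _))
  -- p₀ + Δ d₀ is feasible
  have hpΔ : ∀ j, |(-(A.transpose.mulVec (p₀ + Δ • d₀))) j| ≤ 1 := by
    by_contra hc
    exact hdom Δ hΔ0 hΔ1 (by rw [dualBPDN, if_neg hc])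
  -- real subgradient inequality for -d₀
  have h1 := subdiff_real hp₀ hmem
  simp only [Pi.neg_apply] at h1
  -- real subgradient inequality for s* = t p₀ + b
  have hstar_real : ∀ q, (∀ j, |(-(A.transpose.mulVec q)) j| ≤ 1) →
      (t/2) * ∑ i, p₀ i ^2 + ∑ i, p₀ i * b i + ∑ i, (t * p₀ i + b i) * (q i - p₀ i)
        ≤ (t/2) * ∑ i, q i ^2 + ∑ i, q i * b i := by
    intro q hq
    rw [qform m t p₀ q b]
    have h0 : 0 ≤ (t/2) * ∑ i, (q i - p₀ i)^2 :=
      mul_nonneg (by linarith) (Finset.sum_nonneg fun i _ => sq_nonneg _)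
    linarith
  -- minimal norm selection: Z + E ≤ 0
  have hZE : (∑ i, d₀ i * (t * p₀ i + b i)) + ∑ i, d₀ i ^ 2 ≤ 0 := by
    have h2 : 2*((∑ i, d₀ i * (t * p₀ i + b i)) + ∑ i, d₀ i ^ 2) ≤ 0 := by
      apply limit_trick (K := ∑ i, (t * p₀ i + b i + d₀ i)^2)
      intro l hl0 hl1
      have hsl : (fun i => -(d₀ i) + l * (t * p₀ i + b i + d₀ i))
          ∈ subdiffBPDN m n A b t p₀ := by
        apply subdiff_of_real hp₀
        intro q hq
        have ha := h1 q hq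
        have hb := hstar_real q hq
        have hc : ∑ i, (-(d₀ i) + l * (t * p₀ i + b i + d₀ i)) * (q i - p₀ i)
            = (1 - l) * ∑ i, -(d₀ i) * (q i - p₀ i)
              + l * ∑ i, (t * p₀ i + b i) * (q i - p₀ i) := by
          simp only [Finset.mul_sum, ← Finset.sum_add_distrib]
          exact Finset.sum_congr rfl fun i _ => by ring
        rw [hc]
        nlinarith [ha, hb]
      have hnorm : ∑ i, d₀ i ^ 2 ≤ ∑ i, (-(d₀ i) + l * (t * p₀ i + b i + d₀ i))^2 :=
        hproj _ hsl
      have hexp : ∑ i, (-(d₀ i) + l * (t * p₀ i + b i + d₀ i))^2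
          = ∑ i, d₀ i ^2 + (2*l) * (∑ i, (-(d₀ i)) * (t * p₀ i + b i + d₀ i))
            + l^2 * ∑ i, (t * p₀ i + b i + d₀ i)^2 := by
        simp only [Finset.mul_sum, ← Finset.sum_add_distrib]
        exact Finset.sum_congr rfl fun i _ => by ring
      have hmid : ∑ i, (-(d₀ i)) * (t * p₀ i + b i + d₀ i)
          + ((∑ i, d₀ i * (t * p₀ i + b i)) + ∑ i, d₀ i ^ 2) = 0 := by
        simp only [← Finset.sum_add_distrib]
        exact Finset.sum_eq_zero fun i _ => by ring
      rw [hexp] at hnorm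
      apply le_of_mul_le_mul_left _ hl0
      nlinarith [hnorm, hmid]
    linarith
  -- normal cone property of -d₀
  have hNC : ∀ q, (∀ j, |(-(A.transpose.mulVec q)) j| ≤ 1) →
      ∑ i, (-(d₀ i) - (t * p₀ i + b i)) * (q i - p₀ i) ≤ 0 := by
    intro q hq
    apply limit_trick (K := (t/2) * ∑ i, (q i - p₀ i)^2)
    intro l hl0 hl1
    have hql := C_convex hp₀ hq hl0.le hl1
    have hineq := h1 _ hql
    rw [qform m t p₀ (p₀ + l • (q - p₀)) b] at hineq
    simp only [Pi.add_apply, Pi.smul_apply, Pi.sub_apply, smul_eq_mul] at hineq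
    have i1 : ∑ i, -(d₀ i) * (p₀ i + l * (q i - p₀ i) - p₀ i)
        = l * ∑ i, -(d₀ i) * (q i - p₀ i) := by
      simp only [Finset.mul_sum]
      exact Finset.sum_congr rfl fun i _ => by ring
    have i2 : ∑ i, (t * p₀ i + b i) * (p₀ i + l * (q i - p₀ i) - p₀ i)
        = l * ∑ i, (t * p₀ i + b i) * (q i - p₀ i) := by
      simp only [Finset.mul_sum]
      exact Finset.sum_congr rfl fun i _ => by ring
    have i3 : ∑ i, (p₀ i + l * (q i - p₀ i) - p₀ i)^2
        = l^2 * ∑ i, (q i - p₀ i)^2 := by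
      simp only [Finset.mul_sum]
      exact Finset.sum_congr rfl fun i _ => by ring
    have i4 : ∑ i, (-(d₀ i) - (t * p₀ i + b i)) * (q i - p₀ i)
        = (∑ i, -(d₀ i) * (q i - p₀ i)) - ∑ i, (t * p₀ i + b i) * (q i - p₀ i) := by
      rw [← Finset.sum_sub_distrib]
      exact Finset.sum_congr rfl fun i _ => by ring
    rw [i1, i2, i3] at hineq
    rw [i4]
    apply le_of_mul_le_mul_left _ hl0
    nlinarith [hineq]
  -- final assembly
  apply subdiff_of_real hpΔ
  intro q hq
  simp only [Pi.add_apply, Pi.smul_apply, smul_eq_mul, Pi.neg_apply]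
  have hq1 := qform m t p₀ q b
  have hq2 := qform m t p₀ (p₀ + Δ • d₀) b
  simp only [Pi.add_apply, Pi.smul_apply, smul_eq_mul] at hq2
  have j1 : ∑ i, (t * p₀ i + b i) * (p₀ i + Δ * d₀ i - p₀ i)
      = Δ * ∑ i, d₀ i * (t * p₀ i + b i) := by
    simp only [Finset.mul_sum]
    exact Finset.sum_congr rfl fun i _ => by ring
  have j2 : ∑ i, (p₀ i + Δ * d₀ i - p₀ i)^2 = Δ^2 * ∑ i, d₀ i ^ 2 := by
    simp only [Finset.mul_sum]
    exact Finset.sum_congr rfl fun i _ => by ring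
  rw [j1, j2] at hq2
  have j3 : ∑ i, -(1 - t * Δ) * d₀ i * (q i - (p₀ i + Δ * d₀ i))
      = -(1 - t * Δ) * (∑ i, d₀ i * (q i - p₀ i))
        + (1 - t * Δ) * Δ * (∑ i, d₀ i ^ 2) := by
    simp only [Finset.mul_sum, ← Finset.sum_add_distrib]
    exact Finset.sum_congr rfl fun i _ => by ring
  rw [j3]
  have hNCq := hNC q hq
  have j4 : ∑ i, (-(d₀ i) - (t * p₀ i + b i)) * (q i - p₀ i)
      + (∑ i, d₀ i * (q i - p₀ i) + ∑ i, (t * p₀ i + b i) * (q i - p₀ i)) = 0 := by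
    simp only [← Finset.sum_add_distrib]
    exact Finset.sum_eq_zero fun i _ => by ring
  have hWnn : 0 ≤ ∑ i, (q i - p₀ i - Δ * d₀ i)^2 :=
    Finset.sum_nonneg fun i _ => sq_nonneg _
  have hWid : ∑ i, (q i - p₀ i - Δ * d₀ i)^2 + (2*Δ) * ∑ i, d₀ i * (q i - p₀ i)
      = ∑ i, (q i - p₀ i)^2 + Δ^2 * ∑ i, d₀ i ^ 2 := by
    simp only [Finset.mul_sum, ← Finset.sum_add_distrib]
    exact Finset.sum_congr rfl fun i _ => by ring
  have hprod1 : 0 ≤ Δ * (-((∑ i, d₀ i * (t * p₀ i + b i)) + ∑ i, d₀ i ^ 2)) :=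
    mul_nonneg hΔ0 (by linarith)
  have hprod2 : 0 ≤ t * ∑ i, (q i - p₀ i - Δ * d₀ i)^2 := mul_nonneg ht hWnn
  have hW2 : t * (∑ i, (q i - p₀ i - Δ * d₀ i)^2 + (2*Δ) * ∑ i, d₀ i * (q i - p₀ i))
      = t * (∑ i, (q i - p₀ i)^2 + Δ^2 * ∑ i, d₀ i ^ 2) := by rw [hWid]
  nlinarith [hq1, hq2, hNCq, j4, hprod1, hprod2, hW2]
end

section
/- Let V(p) = (t/2)‖p‖² + ⟨p, b⟩ + χ_{B∞}(-Aᵀp), p₀ ∈ dom ∂V, and d₀ = -proj_{∂V(p₀)}(0). For every Δ ∈ [0, Δ*(p₀)) (strictly below the maximal step), the evolution rule holds: -proj_{∂V(p₀ + Δd₀)}(0) = (1 - tΔ)d₀. -/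
def feasA (m n : ℕ) (A : Matrix (Fin m) (Fin n) ℝ) (q : Fin m → ℝ) : Prop :=
  ∀ j, |(-(A.transpose.mulVec q)) j| ≤ 1

noncomputable def fvalA (m : ℕ) (b : Fin m → ℝ) (t : ℝ) (p : Fin m → ℝ) : ℝ :=
  t / 2 * ∑ i, p i ^ 2 + ∑ i, p i * b i

lemma dual_eq_of_feas (m n : ℕ) (A : Matrix (Fin m) (Fin n) ℝ) (b : Fin m → ℝ) (t : ℝ)
    {p : Fin m → ℝ} (hp : feasA m n A p) :
    dualBPDN m n A b t p = ((fvalA m b t p : ℝ) : EReal) := by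
  unfold dualBPDN
  unfold feasA at hp
  rw [if_pos hp]
  rfl

lemma mem_subdiff_iff (m n : ℕ) (A : Matrix (Fin m) (Fin n) ℝ) (b : Fin m → ℝ) (t : ℝ)
    {p s : Fin m → ℝ} (hp : feasA m n A p) :
    s ∈ subdiffBPDN m n A b t p ↔
      ∀ q, feasA m n A q →
        fvalA m b t p + ∑ i, s i * (q i - p i) ≤ fvalA m b t q := by
  unfold subdiffBPDN
  constructor
  · intro h q hq
    have h2 := h q
    rw [dual_eq_of_feas m n A b t hp, dual_eq_of_feas m n A b t hq, ← EReal.coe_add] at h2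
    exact_mod_cast h2
  · intro h q
    by_cases hq : feasA m n A q
    · rw [dual_eq_of_feas m n A b t hp, dual_eq_of_feas m n A b t hq, ← EReal.coe_add]
      exact_mod_cast h q hq
    · have hq' : dualBPDN m n A b t q = ⊤ := by unfold feasA at hq; unfold dualBPDN; rw [if_neg hq]
      rw [hq']
      exact le_top

lemma feas_segment (m n : ℕ) (A : Matrix (Fin m) (Fin n) ℝ)
    {p q : Fin m → ℝ} (hp : feasA m n A p) (hq : feasA m n A q) {ε : ℝ}
    (h0 : 0 ≤ ε) (h1 : ε ≤ 1) : feasA m n A (p + ε • (q - p)) := by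
  intro j
  have hlin : (-(A.transpose.mulVec (p + ε • (q - p)))) j
      = (1 - ε) * (-(A.transpose.mulVec p)) j + ε * (-(A.transpose.mulVec q)) j := by
    simp [Matrix.mulVec_add, Matrix.mulVec_smul, Matrix.mulVec_sub]
    ring
  rw [hlin]
  have hx := hp j
  have hy := hq j
  calc |(1 - ε) * (-(A.transpose.mulVec p)) j + ε * (-(A.transpose.mulVec q)) j|
      ≤ |(1 - ε) * (-(A.transpose.mulVec p)) j| + |ε * (-(A.transpose.mulVec q)) j| :=
        abs_add_le _ _
    _ = (1 - ε) * |(-(A.transpose.mulVec p)) j| + ε * |(-(A.transpose.mulVec q)) j| := by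
        rw [abs_mul, abs_mul, abs_of_nonneg h0, abs_of_nonneg (by linarith)]
    _ ≤ (1 - ε) * 1 + ε * 1 := by
        gcongr <;> linarith
    _ = 1 := by ring

lemma nonpos_of_le_eps {X c : ℝ} (hc : 0 ≤ c)
    (h : ∀ ε : ℝ, 0 < ε → ε ≤ 1 → X ≤ ε * c) : X ≤ 0 := by
  by_contra hX
  push_neg at hX
  have hpos : 0 < min 1 (X / (2 * (c + 1))) := lt_min one_pos (by positivity)
  have h1 : X ≤ min 1 (X / (2 * (c + 1))) * c := h _ hpos (min_le_left _ _)
  have h2 : min 1 (X / (2 * (c + 1))) * c ≤ X / (2 * (c + 1)) * c :=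
    mul_le_mul_of_nonneg_right (min_le_right _ _) hc
  have h3 : X ≤ X / (2 * (c + 1)) * c := h1.trans h2
  rw [div_mul_eq_mul_div, le_div_iff₀ (by positivity)] at h3
  nlinarith

lemma normal_of_mem (m n : ℕ) (A : Matrix (Fin m) (Fin n) ℝ) (b : Fin m → ℝ) (t : ℝ)
    (ht : 0 ≤ t) {p s : Fin m → ℝ} (hp : feasA m n A p)
    (hs : s ∈ subdiffBPDN m n A b t p) {q : Fin m → ℝ} (hq : feasA m n A q) :
    ∑ i, (s i - (t * p i + b i)) * (q i - p i) ≤ 0 := by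
  have key := (mem_subdiff_iff m n A b t hp).1 hs
  have hc : (0:ℝ) ≤ t / 2 * ∑ i, (q i - p i) ^ 2 :=
    mul_nonneg (by linarith) (Finset.sum_nonneg fun i _ => sq_nonneg _)
  apply nonpos_of_le_eps hc
  intro ε hε0 hε1
  have hfe := feas_segment m n A hp hq hε0.le hε1
  have h2 := key _ hfe
  simp only [Pi.add_apply, Pi.smul_apply, Pi.sub_apply, smul_eq_mul] at h2
  have e1 : ∑ i, s i * (p i + ε * (q i - p i) - p i) = ε * ∑ i, s i * (q i - p i) := by
    rw [Finset.mul_sum]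
    exact Finset.sum_congr rfl fun i _ => by ring
  have e2 : fvalA m b t (fun i => p i + ε * (q i - p i))
      = fvalA m b t p + ε * ∑ i, (t * p i + b i) * (q i - p i)
        + ε ^ 2 * (t / 2 * ∑ i, (q i - p i) ^ 2) := by
    unfold fvalA
    simp only [Finset.mul_sum, ← Finset.sum_add_distrib]
    exact Finset.sum_congr rfl fun i _ => by ring
  have e3 : fvalA m b t (p + ε • (q - p)) = fvalA m b t (fun i => p i + ε * (q i - p i)) := rfl
  rw [e1, e3, e2] at h2
  have e4 : ∑ i, (s i - (t * p i + b i)) * (q i - p i)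
      = ∑ i, s i * (q i - p i) - ∑ i, (t * p i + b i) * (q i - p i) := by
    rw [← Finset.sum_sub_distrib]
    exact Finset.sum_congr rfl fun i _ => by ring
  rw [e4]
  nlinarith [h2, hε0]

lemma mem_of_normal (m n : ℕ) (A : Matrix (Fin m) (Fin n) ℝ) (b : Fin m → ℝ) (t : ℝ)
    (ht : 0 ≤ t) {p u : Fin m → ℝ} (hp : feasA m n A p)
    (hu : ∀ q, feasA m n A q → ∑ i, u i * (q i - p i) ≤ 0) :
    (fun i => t * p i + b i + u i) ∈ subdiffBPDN m n A b t p := by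
  rw [mem_subdiff_iff m n A b t hp]
  intro q hq
  have expand : fvalA m b t q - fvalA m b t p - ∑ i, (t * p i + b i) * (q i - p i)
      = t / 2 * ∑ i, (q i - p i) ^ 2 := by
    unfold fvalA
    simp only [Finset.mul_sum, ← Finset.sum_add_distrib, ← Finset.sum_sub_distrib]
    exact Finset.sum_congr rfl fun i _ => by ring
  have e : ∑ i, (t * p i + b i + u i) * (q i - p i)
      = ∑ i, (t * p i + b i) * (q i - p i) + ∑ i, u i * (q i - p i) := by
    rw [← Finset.sum_add_distrib]
    exact Finset.sum_congr rfl fun i _ => by ring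
  have h1 := hu q hq
  have hnn : (0:ℝ) ≤ t / 2 * ∑ i, (q i - p i) ^ 2 :=
    mul_nonneg (by linarith) (Finset.sum_nonneg fun i _ => sq_nonneg _)
  linarith

/-- The evolution rule (minimal selection along the descent ray): for every
`Δ ∈ [0, Δ*(p₀))`, the minimal-norm subgradient of `V` at `p₀ + Δ d₀` is
`-(1 - tΔ) d₀`, i.e. `-proj_{∂V(p₀ + Δ d₀)}(0) = (1 - tΔ) d₀`. -/
theorem stmt13 (m n : ℕ) (A : Matrix (Fin m) (Fin n) ℝ) (b : Fin m → ℝ)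
    (t : ℝ) (ht : 0 ≤ t) (p₀ d₀ : Fin m → ℝ)
    (hmem : -d₀ ∈ subdiffBPDN m n A b t p₀)
    (hproj : ∀ s ∈ subdiffBPDN m n A b t p₀, ∑ i, d₀ i ^ 2 ≤ ∑ i, s i ^ 2)
    (Δstar : ℝ)
    (hdom : ∀ Δ : ℝ, 0 ≤ Δ → Δ ≤ Δstar → dualBPDN m n A b t (p₀ + Δ • d₀) ≠ ⊤) :
    ∀ Δ : ℝ, 0 ≤ Δ → Δ < Δstar →
      ((-(1 - t * Δ)) • d₀ ∈ subdiffBPDN m n A b t (p₀ + Δ • d₀)) ∧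
      (∀ s ∈ subdiffBPDN m n A b t (p₀ + Δ • d₀),
        ∑ i, ((1 - t * Δ) * d₀ i) ^ 2 ≤ ∑ i, s i ^ 2) := by
  intro Δ hΔ0 hΔ
  have hΔs : 0 ≤ Δstar := hΔ0.trans hΔ.le
  have hfeas : ∀ δ : ℝ, 0 ≤ δ → δ ≤ Δstar → feasA m n A (p₀ + δ • d₀) := by
    intro δ h1 h2
    by_contra hc
    exact hdom δ h1 h2 (by unfold feasA at hc; unfold dualBPDN; rw [if_neg hc])
  have hp₀ : feasA m n A p₀ := by
    have h := hfeas 0 le_rfl hΔs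
    rwa [show p₀ + (0:ℝ) • d₀ = p₀ by simp] at h
  have hpΔ : feasA m n A (p₀ + Δ • d₀) := hfeas Δ hΔ0 hΔ.le
  set v : Fin m → ℝ := fun i => -d₀ i - (t * p₀ i + b i) with hvdef
  have hvnorm : ∀ q, feasA m n A q → ∑ i, v i * (q i - p₀ i) ≤ 0 := by
    intro q hq
    have h := normal_of_mem m n A b t ht hp₀ hmem hq
    have e : ∑ i, v i * (q i - p₀ i) = ∑ i, ((-d₀) i - (t * p₀ i + b i)) * (q i - p₀ i) :=
      Finset.sum_congr rfl fun i _ => by simp [hvdef]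
    rw [e]; exact h
  have hray : ∀ lam : ℝ, 0 ≤ lam →
      2 * (lam - 1) * (∑ i, d₀ i * v i) ≤ (lam - 1) ^ 2 * ∑ i, v i ^ 2 := by
    intro lam hlam
    have hmem' : (fun i => t * p₀ i + b i + lam * v i) ∈ subdiffBPDN m n A b t p₀ := by
      refine mem_of_normal m n A b t ht hp₀ (u := fun i => lam * v i) ?_
      intro q hq
      have e : ∑ i, (lam * v i) * (q i - p₀ i) = lam * ∑ i, v i * (q i - p₀ i) := by
        rw [Finset.mul_sum]; exact Finset.sum_congr rfl fun i _ => by ring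
      rw [e]
      exact mul_nonpos_of_nonneg_of_nonpos hlam (hvnorm q hq)
    have h := hproj _ hmem'
    have e : ∑ i, (t * p₀ i + b i + lam * v i) ^ 2
        = ∑ i, d₀ i ^ 2 - 2 * (lam - 1) * ∑ i, d₀ i * v i + (lam - 1) ^ 2 * ∑ i, v i ^ 2 := by
      simp only [Finset.mul_sum, ← Finset.sum_add_distrib, ← Finset.sum_sub_distrib]
      refine Finset.sum_congr rfl fun i _ => ?_
      have hv : t * p₀ i + b i = -d₀ i - v i := by simp [hvdef]
      rw [hv]; ring
    rw [e] at h
    linarith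
  have hVn0 : (0:ℝ) ≤ ∑ i, v i ^ 2 := Finset.sum_nonneg fun i _ => sq_nonneg _
  have hDvle : (∑ i, d₀ i * v i) ≤ 0 := by
    apply nonpos_of_le_eps (c := (∑ i, v i ^ 2) / 2) (by linarith)
    intro ε hε0 hε1
    have h := hray (1 + ε) (by linarith)
    nlinarith
  have hDvge : (0:ℝ) ≤ ∑ i, d₀ i * v i := by
    have h : -(∑ i, d₀ i * v i) ≤ 0 := by
      apply nonpos_of_le_eps (c := (∑ i, v i ^ 2) / 2) (by linarith)
      intro ε hε0 hε1
      have h := hray (1 - ε) (by linarith)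
      nlinarith
    linarith
  have hDv0 : (∑ i, d₀ i * v i) = 0 := le_antisymm hDvle hDvge
  constructor
  · -- part (i)
    have hnormΔ : ∀ q, feasA m n A q → ∑ i, v i * (q i - (p₀ + Δ • d₀) i) ≤ 0 := by
      intro q hq
      have e : ∑ i, v i * (q i - (p₀ + Δ • d₀) i)
          = ∑ i, v i * (q i - p₀ i) - Δ * ∑ i, d₀ i * v i := by
        simp only [Pi.add_apply, Pi.smul_apply, smul_eq_mul, Finset.mul_sum,
          ← Finset.sum_sub_distrib]
        exact Finset.sum_congr rfl fun i _ => by ring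
      rw [e, hDv0]
      have := hvnorm q hq
      linarith
    have h := mem_of_normal m n A b t ht hpΔ hnormΔ
    have e : (fun i => t * (p₀ + Δ • d₀) i + b i + v i) = (-(1 - t * Δ)) • d₀ := by
      funext i
      simp only [hvdef, Pi.add_apply, Pi.smul_apply, smul_eq_mul, Pi.neg_apply]
      ring
    rwa [e] at h
  · -- part (ii)
    intro s hs
    rcases eq_or_lt_of_le hΔ0 with h0 | hΔpos
    · -- Δ = 0
      have hs' : s ∈ subdiffBPDN m n A b t p₀ := by
        rwa [show p₀ + Δ • d₀ = p₀ by rw [← h0]; simp] at hs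
      have h := hproj s hs'
      calc ∑ i, ((1 - t * Δ) * d₀ i) ^ 2 = ∑ i, d₀ i ^ 2 :=
            Finset.sum_congr rfl fun i _ => by rw [← h0]; ring
        _ ≤ _ := h
    · -- Δ > 0
      have hp' : feasA m n A (p₀ + ((Δ + Δstar) / 2) • d₀) :=
        hfeas _ (by linarith) (by linarith)
      have hU1 := normal_of_mem m n A b t ht hpΔ hs hp₀
      have hU2 := normal_of_mem m n A b t ht hpΔ hs hp'
      have eU1 : ∑ i, (s i - (t * (p₀ + Δ • d₀) i + b i)) * (p₀ i - (p₀ + Δ • d₀) i)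
          = -Δ * ∑ i, (s i - (t * (p₀ + Δ • d₀) i + b i)) * d₀ i := by
        simp only [Pi.add_apply, Pi.smul_apply, smul_eq_mul, Finset.mul_sum]
        exact Finset.sum_congr rfl fun i _ => by ring
      have eU2 : ∑ i, (s i - (t * (p₀ + Δ • d₀) i + b i)) *
            ((p₀ + ((Δ + Δstar) / 2) • d₀) i - (p₀ + Δ • d₀) i)
          = ((Δ + Δstar) / 2 - Δ) * ∑ i, (s i - (t * (p₀ + Δ • d₀) i + b i)) * d₀ i := by
        simp only [Pi.add_apply, Pi.smul_apply, smul_eq_mul, Finset.mul_sum]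
        exact Finset.sum_congr rfl fun i _ => by ring
      rw [eU1] at hU1
      rw [eU2] at hU2
      have hUge : 0 ≤ ∑ i, (s i - (t * (p₀ + Δ • d₀) i + b i)) * d₀ i := by nlinarith
      have hUle : (∑ i, (s i - (t * (p₀ + Δ • d₀) i + b i)) * d₀ i) ≤ 0 := by nlinarith
      have hU0 : (∑ i, (s i - (t * (p₀ + Δ • d₀) i + b i)) * d₀ i) = 0 :=
        le_antisymm hUle hUge
      have e2 : ∑ i, (t * p₀ i + b i) * d₀ i = -∑ i, d₀ i ^ 2 := by
        have e3 : ∑ i, (d₀ i * v i + d₀ i ^ 2 + (t * p₀ i + b i) * d₀ i) = 0 :=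
          Finset.sum_eq_zero fun i _ => by simp [hvdef]; ring
        rw [Finset.sum_add_distrib, Finset.sum_add_distrib, hDv0] at e3
        linarith
      have hsd : ∑ i, s i * d₀ i = (t * Δ - 1) * ∑ i, d₀ i ^ 2 := by
        have e1 : ∑ i, s i * d₀ i
            = ∑ i, (s i - (t * (p₀ + Δ • d₀) i + b i)) * d₀ i
              + ∑ i, (t * p₀ i + b i) * d₀ i + t * Δ * ∑ i, d₀ i ^ 2 := by
          simp only [Pi.add_apply, Pi.smul_apply, smul_eq_mul, Finset.mul_sum,
            ← Finset.sum_add_distrib]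
          exact Finset.sum_congr rfl fun i _ => by ring
        rw [e1, hU0, e2]
        ring
      have CS := Finset.sum_mul_sq_le_sq_mul_sq Finset.univ s d₀
      have hD : (0:ℝ) ≤ ∑ i, d₀ i ^ 2 := Finset.sum_nonneg fun i _ => sq_nonneg _
      have hS : (0:ℝ) ≤ ∑ i, s i ^ 2 := Finset.sum_nonneg fun i _ => sq_nonneg _
      have egoal : ∑ i, ((1 - t * Δ) * d₀ i) ^ 2 = (1 - t * Δ) ^ 2 * ∑ i, d₀ i ^ 2 := by
        rw [Finset.mul_sum]
        exact Finset.sum_congr rfl fun i _ => by ring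
      rw [egoal]
      rcases hD.eq_or_lt with hD0 | hD0
      · rw [← hD0]
        simpa using hS
      · rw [hsd] at CS
        nlinarith [CS, hD0, mul_pos hD0 hD0]
end

section
/- Let V(p) = (t/2)‖p‖² + ⟨p, b⟩ + χ_{B∞}(-Aᵀp), p₀ ∈ dom ∂V, d₀ = -proj_{∂V(p₀)}(0), and Δ ∈ [0, Δ*(p₀)). Then the equicorrelation set shrinks: E(p₀ + Δd₀) ⊂ E(p₀), where E(p) = {j : |⟨-Aᵀp, e_j⟩| = 1}; moreover ∂V(p₀ + Δd₀) ⊂ {tΔd₀} + ∂V(p₀). -/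
/-- inner product on `Fin m → ℝ` as a plain sum. -/
noncomputable def ipR (m : ℕ) (x y : Fin m → ℝ) : ℝ := ∑ i, x i * y i

lemma ipR_add_left (m : ℕ) (x y z : Fin m → ℝ) :
    ipR m (x + y) z = ipR m x z + ipR m y z := by
  simp [ipR, add_mul, Finset.sum_add_distrib]

lemma ipR_add_right (m : ℕ) (x y z : Fin m → ℝ) :
    ipR m x (y + z) = ipR m x y + ipR m x z := by
  simp [ipR, mul_add, Finset.sum_add_distrib]

lemma ipR_sub_left (m : ℕ) (x y z : Fin m → ℝ) :
    ipR m (x - y) z = ipR m x z - ipR m y z := by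
  simp [ipR, sub_mul, Finset.sum_sub_distrib]

lemma ipR_sub_right (m : ℕ) (x y z : Fin m → ℝ) :
    ipR m x (y - z) = ipR m x y - ipR m x z := by
  simp [ipR, mul_sub, Finset.sum_sub_distrib]

lemma ipR_smul_left (m : ℕ) (c : ℝ) (x y : Fin m → ℝ) :
    ipR m (c • x) y = c * ipR m x y := by
  simp [ipR, Finset.mul_sum, mul_assoc]

lemma ipR_smul_right (m : ℕ) (c : ℝ) (x y : Fin m → ℝ) :
    ipR m x (c • y) = c * ipR m x y := by
  simp [ipR, Finset.mul_sum]
  ring_nf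
  apply Finset.sum_congr rfl
  intro i _
  ring

lemma ipR_comm (m : ℕ) (x y : Fin m → ℝ) : ipR m x y = ipR m y x := by
  simp [ipR, mul_comm]

lemma ipR_self_nonneg (m : ℕ) (x : Fin m → ℝ) : 0 ≤ ipR m x x :=
  Finset.sum_nonneg fun i _ => mul_self_nonneg _

lemma dualBPDN_of_feas (m n : ℕ) (A : Matrix (Fin m) (Fin n) ℝ) (b : Fin m → ℝ)
    (t : ℝ) (p : Fin m → ℝ) (h : ∀ j, |(-(A.transpose.mulVec p)) j| ≤ 1) :
    dualBPDN m n A b t p = (((t / 2) * ∑ i, p i ^ 2 + ∑ i, p i * b i : ℝ) : EReal) := by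
  rw [dualBPDN, if_pos h]

/-- For steps `Δ ∈ [0, Δ*(p₀))` along the minimal-selection descent direction, the
equicorrelation set shrinks, `E(p₀ + Δ d₀) ⊆ E(p₀)` with
`E(p) = {j : |⟨-Aᵀp, eⱼ⟩| = 1}`, and the subdifferential satisfies
`∂V(p₀ + Δ d₀) ⊆ {tΔ d₀} + ∂V(p₀)`. -/
theorem stmt14 (m n : ℕ) (A : Matrix (Fin m) (Fin n) ℝ) (b : Fin m → ℝ)
    (t : ℝ) (ht : 0 ≤ t) (p₀ d₀ : Fin m → ℝ)
    (hmem : -d₀ ∈ subdiffBPDN m n A b t p₀)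
    (hproj : ∀ s ∈ subdiffBPDN m n A b t p₀, ∑ i, d₀ i ^ 2 ≤ ∑ i, s i ^ 2)
    (Δstar : ℝ)
    (hdom : ∀ Δ : ℝ, 0 ≤ Δ → Δ ≤ Δstar → dualBPDN m n A b t (p₀ + Δ • d₀) ≠ ⊤) :
    ∀ Δ : ℝ, 0 ≤ Δ → Δ < Δstar →
      ({j : Fin n | |(-(A.transpose.mulVec (p₀ + Δ • d₀))) j| = 1} ⊆
        {j : Fin n | |(-(A.transpose.mulVec p₀)) j| = 1}) ∧
      (subdiffBPDN m n A b t (p₀ + Δ • d₀) ⊆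
        {x : Fin m → ℝ | ∃ s ∈ subdiffBPDN m n A b t p₀, x = (t * Δ) • d₀ + s}) := by
  intro Δ hΔ0 hΔlt
  have hpos : 0 < Δstar := lt_of_le_of_lt hΔ0 hΔlt
  -- feasibility along the segment
  have hfeas : ∀ Δ' : ℝ, 0 ≤ Δ' → Δ' ≤ Δstar →
      ∀ j, |(-(A.transpose.mulVec (p₀ + Δ' • d₀))) j| ≤ 1 := by
    intro Δ' h1 h2 j
    by_contra h
    apply hdom Δ' h1 h2
    rw [dualBPDN, if_neg (fun hall => h (hall j))]
  have hentry : ∀ (s : ℝ) (j : Fin n),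
      (-(A.transpose.mulVec (p₀ + s • d₀))) j
        = -((A.transpose.mulVec p₀) j + s * (A.transpose.mulVec d₀) j) := by
    intro s j
    simp [Matrix.mulVec_add, Matrix.mulVec_smul]
  have hfeas0 : ∀ j, |(-(A.transpose.mulVec p₀)) j| ≤ 1 := by
    intro j
    have := hfeas 0 le_rfl hpos.le j
    simpa using this
  have hfeasΔ := hfeas Δ hΔ0 hΔlt.le
  have hfeasS := hfeas Δstar hpos.le le_rfl
  obtain ⟨θ, hθ0, hθ1, hθΔ⟩ : ∃ θ : ℝ, 0 ≤ θ ∧ θ < 1 ∧ θ * Δstar = Δ :=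
    ⟨Δ / Δstar, div_nonneg hΔ0 hpos.le, (div_lt_one hpos).mpr hΔlt,
      div_mul_cancel₀ _ hpos.ne'⟩
  constructor
  · -- equicorrelation set shrinks
    intro j hj
    simp only [Set.mem_setOf_eq] at hj ⊢
    set X := (A.transpose.mulVec p₀) j with hX
    set C := (A.transpose.mulVec d₀) j with hC
    have h0 : |(-X : ℝ)| ≤ 1 := by simpa using hfeas0 j
    have hS : |(-(X + Δstar * C) : ℝ)| ≤ 1 := by
      have := hfeasS j; rwa [hentry] at this
    have hjj : |(-(X + Δ * C) : ℝ)| = 1 := by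
      have := hj; rwa [hentry] at this
    have hconv : (-(X + Δ * C) : ℝ) = (1 - θ) * (-X) + θ * (-(X + Δstar * C)) := by
      linear_combination C * hθΔ
    have habs := abs_add_le ((1 - θ) * (-X)) (θ * (-(X + Δstar * C)))
    rw [← hconv, hjj] at habs
    rw [abs_mul, abs_mul, abs_of_nonneg (by linarith : (0:ℝ) ≤ 1 - θ),
      abs_of_nonneg hθ0] at habs
    have h1 : 1 ≤ |(-X : ℝ)| := by nlinarith
    have : |(-X : ℝ)| = 1 := le_antisymm h0 h1
    simpa using this
  · -- subdifferential inclusion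
    intro x hx
    simp only [Set.mem_setOf_eq]
    refine ⟨x - (t * Δ) • d₀, ?_, by abel⟩
    intro q
    by_cases hq : ∀ j, |(-(A.transpose.mulVec q)) j| ≤ 1
    · -- q feasible: reduce to a real inequality
      set p₁ : Fin m → ℝ := p₀ + Δ • d₀ with hp₁
      set q' : Fin m → ℝ := θ • (p₀ + Δstar • d₀) + (1 - θ) • q with hq'
      have hq'feas : ∀ j, |(-(A.transpose.mulVec q')) j| ≤ 1 := by
        intro j
        have hval : (-(A.transpose.mulVec q')) j
            = θ * (-(A.transpose.mulVec (p₀ + Δstar • d₀))) j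
              + (1 - θ) * (-(A.transpose.mulVec q)) j := by
          simp [hq', Matrix.mulVec_add, Matrix.mulVec_smul]
          ring
        rw [hval]
        calc |θ * (-(A.transpose.mulVec (p₀ + Δstar • d₀))) j
              + (1 - θ) * (-(A.transpose.mulVec q)) j|
            ≤ |θ * (-(A.transpose.mulVec (p₀ + Δstar • d₀))) j|
              + |(1 - θ) * (-(A.transpose.mulVec q)) j| := abs_add_le _ _
          _ ≤ θ * 1 + (1 - θ) * 1 := by
              rw [abs_mul, abs_mul, abs_of_nonneg hθ0,
                abs_of_nonneg (by linarith : (0:ℝ) ≤ 1 - θ)]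
              exact add_le_add (mul_le_mul_of_nonneg_left (hfeasS j) hθ0)
                (mul_le_mul_of_nonneg_left (hq j) (by linarith))
          _ = 1 := by ring
      have hq'eq : q' = p₁ + (1 - θ) • (q - p₀) := by
        funext i
        simp [hq', hp₁, smul_eq_mul]
        linear_combination (d₀ i) * hθΔ
      -- extract real inequality from hx at q'
      have hK := hx q'
      rw [dualBPDN_of_feas m n A b t p₁ hfeasΔ, dualBPDN_of_feas m n A b t q' hq'feas] at hK
      have hKr : (t / 2) * ∑ i, p₁ i ^ 2 + ∑ i, p₁ i * b i + ∑ i, x i * (q' i - p₁ i)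
          ≤ (t / 2) * ∑ i, q' i ^ 2 + ∑ i, q' i * b i := by
        exact_mod_cast hK
      rw [dualBPDN_of_feas m n A b t p₀ hfeas0, dualBPDN_of_feas m n A b t q hq]
      have goalr : (t / 2) * ∑ i, p₀ i ^ 2 + ∑ i, p₀ i * b i
          + ∑ i, (x - (t * Δ) • d₀) i * (q i - p₀ i)
          ≤ (t / 2) * ∑ i, q i ^ 2 + ∑ i, q i * b i := by
        -- convert sums to ipR
        have e1 : ∀ p : Fin m → ℝ, (∑ i, p i ^ 2) = ipR m p p := by
          intro p; simp [ipR, sq]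
        have e2 : ∀ p : Fin m → ℝ, (∑ i, p i * b i) = ipR m p b := by
          intro p; simp [ipR]
        have e3 : (∑ i, x i * (q' i - p₁ i)) = ipR m x (q' - p₁) := by
          simp [ipR]
        have e4 : (∑ i, (x - (t * Δ) • d₀) i * (q i - p₀ i))
            = ipR m (x - (t * Δ) • d₀) (q - p₀) := by
          simp [ipR]
        rw [e1, e1, e2, e2, e4]
        rw [e1, e1, e2, e2, e3] at hKr
        have hq'p₁ : q' - p₁ = (1 - θ) • (q - p₀) := by
          rw [hq'eq]; abel
        rw [hq'p₁, hq'eq, hp₁] at hKr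
        simp only [ipR_add_left, ipR_add_right, ipR_sub_left, ipR_sub_right,
          ipR_smul_left, ipR_smul_right] at hKr ⊢
        have c1 := ipR_comm m p₀ d₀
        have c2 := ipR_comm m p₀ q
        have c3 := ipR_comm m d₀ q
        have hu : 0 ≤ ipR m q q - ipR m q p₀ - ipR m p₀ q + ipR m p₀ p₀ := by
          have h := ipR_self_nonneg m (q - p₀)
          rw [ipR_sub_left, ipR_sub_right, ipR_sub_right] at h
          linarith
        have h1θ : (0:ℝ) < 1 - θ := by linarith
        simp only [c1, c2, c3] at hKr hu ⊢
        refine le_of_mul_le_mul_left ?_ h1θ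
        nlinarith [hKr, hu, mul_nonneg (mul_nonneg (mul_nonneg ht hθ0) h1θ.le) hu]
      exact_mod_cast goalr
    · -- q infeasible
      have hqT : dualBPDN m n A b t q = ⊤ := by rw [dualBPDN, if_neg hq]
      rw [hqT]
      exact le_top
end
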